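/- arXiv:1501.01891 — 4 statements merged into one kernel-verified Lean document; each statement's English description precedes it below -/
import Mathlib

section
/- If a triangle ABC is inscribed in a circle and P is any point on that circle, then the feet of the perpendiculars from P to the three (extended) sides AB, BC, CA are collinear. -/
/-!
In complex coordinates centred at the circumcentre, with circumradius `r`, the foot of the
perpendicular from `p` to the chord `ab` is `(a + b + p - a b p̄ / r²) / 2`. Hence the feet satisfy
`2r² (f₂ - f₁) = (c - a)(p - b) p̄` and `2r² (f₃ - f₁) = (c - b)(p - a) p̄`, so their ratio is the
cross ratio of the concyclic points `a, b, c, p`, which is real.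
-/

/-- The foot of the perpendicular from `P` to the line through `A` and `B`:
`F` lies on line `AB` and `P - F` is orthogonal to `B - A`. -/
def IsFoot (P A B F : EuclideanSpace ℝ (Fin 2)) : Prop :=
  (∃ t : ℝ, F = A + t • (B - A)) ∧ inner ℝ (P - F) (B - A) = (0 : ℝ)

open Complex ComplexConjugate

theorem Collinear.map {k V₁ P₁ V₂ P₂ : Type*} [DivisionRing k] [AddCommGroup V₁] [Module k V₁]
    [AddTorsor V₁ P₁] [AddCommGroup V₂] [Module k V₂] [AddTorsor V₂ P₂] {s : Set P₁}
    (h : Collinear k s) (f : P₁ →ᵃ[k] P₂) : Collinear k (f '' s) := by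
  obtain ⟨p₀, v, hv⟩ := (collinear_iff_exists_forall_eq_smul_vadd s).1 h
  refine (collinear_iff_exists_forall_eq_smul_vadd _).2 ⟨f p₀, f.linear v, ?_⟩
  rintro _ ⟨p, hp, rfl⟩
  obtain ⟨r, rfl⟩ := hv p hp
  exact ⟨r, by simp⟩

theorem IsFoot.map {V : Type*} [NormedAddCommGroup V] [InnerProductSpace ℝ V]
    {P A B F : EuclideanSpace ℝ (Fin 2)} (h : IsFoot P A B F)
    (φ : EuclideanSpace ℝ (Fin 2) →ᵃⁱ[ℝ] V) :
    (∃ t : ℝ, φ F = φ A + t • (φ B - φ A)) ∧ inner ℝ (φ P - φ F) (φ B - φ A) = (0 : ℝ) := by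
  obtain ⟨⟨t, rfl⟩, hperp⟩ := h
  have hsub : ∀ X Y, φ X - φ Y = φ.linearIsometry (X - Y) := fun X Y => (φ.map_vsub X Y).symm
  refine ⟨⟨t, ?_⟩, ?_⟩
  · rw [hsub, add_comm A, ← vadd_eq_add, φ.map_vadd]
    simp [add_comm]
  · rw [hsub, hsub, LinearIsometry.inner_map_map, hperp]

namespace Complex

variable {a b c p : ℂ} {r : ℝ}

theorem ne_zero_of_norm_eq (ha : ‖a‖ = r) (hr : r ≠ 0) : a ≠ 0 :=
  norm_ne_zero_iff.1 (ha ▸ hr)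

theorem conj_eq_sq_div_of_norm_eq (ha : ‖a‖ = r) (hr : r ≠ 0) : conj a = r ^ 2 / a := by
  rw [eq_div_iff (ne_zero_of_norm_eq ha hr), conj_mul', ha]

theorem radius_ne_zero_of_ne (ha : ‖a‖ = r) (hb : ‖b‖ = r) (hab : a ≠ b) : r ≠ 0 := by
  rintro rfl
  exact hab (by rw [norm_eq_zero.1 ha, norm_eq_zero.1 hb])

theorem collinear_of_im_mul_conj_eq_zero {x y z : ℂ} (h : ((z - x) * conj (y - x)).im = 0) :
    Collinear ℝ ({x, y, z} : Set ℂ) := by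
  obtain rfl | hxy := eq_or_ne x y
  · simpa using collinear_pair ℝ x z
  set w := (z - x) * conj (y - x) with hw
  have hd : y - x ≠ 0 := sub_ne_zero.2 hxy.symm
  have hz : z = AffineMap.lineMap x y (w.re / ‖y - x‖ ^ 2) := by
    rw [AffineMap.lineMap_apply_module', ← sub_eq_iff_eq_add, real_smul,
      ← mul_left_inj' ((map_ne_zero conj).2 hd), ← hw, ← conj_eq_iff_re.1 (conj_eq_iff_im.2 h),
      mul_assoc, mul_conj']
    have : (‖y - x‖ : ℂ) ≠ 0 := ofReal_ne_zero.2 (norm_ne_zero_iff.2 hd)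
    push_cast [ofReal_re]
    field_simp
  rw [Set.pair_comm, Set.insert_comm, hz]
  exact collinear_insert_of_mem_affineSpan_pair (AffineMap.lineMap_mem_affineSpan_pair _ _ _)

theorem im_crossRatio_eq_zero (ha : ‖a‖ = r) (hb : ‖b‖ = r) (hc : ‖c‖ = r) (hp : ‖p‖ = r) :
    ((b - c) * (p - a) * conj ((b - a) * (p - c))).im = 0 := by
  obtain rfl | hr := eq_or_ne r 0
  · simp [norm_eq_zero.1 ha, norm_eq_zero.1 hb]
  have := ne_zero_of_norm_eq ha hr
  have := ne_zero_of_norm_eq hb hr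
  have := ne_zero_of_norm_eq hc hr
  have := ne_zero_of_norm_eq hp hr
  refine conj_eq_iff_im.1 ?_
  simp only [map_mul, conj_conj]
  simp only [map_sub, conj_eq_sq_div_of_norm_eq ha hr, conj_eq_sq_div_of_norm_eq hb hr,
    conj_eq_sq_div_of_norm_eq hc hr, conj_eq_sq_div_of_norm_eq hp hr]
  field_simp
  ring

theorem foot_eq_of_norm_eq {f : ℂ} (ha : ‖a‖ = r) (hb : ‖b‖ = r) (hp : ‖p‖ = r) (hab : a ≠ b)
    (hf : ∃ t : ℝ, f = a + t • (b - a)) (hpf : inner ℝ (p - f) (b - a) = 0) :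
    2 * r ^ 2 * f = r ^ 2 * (a + b + p) - a * b * conj p := by
  have hr := radius_ne_zero_of_ne ha hb hab
  have := ne_zero_of_norm_eq ha hr
  have := ne_zero_of_norm_eq hb hr
  have := ne_zero_of_norm_eq hp hr
  obtain ⟨t, rfl⟩ := hf
  rw [Complex.inner] at hpf
  have h := add_conj ((b - a) * conj (p - (a + t • (b - a))))
  rw [hpf, mul_zero, ofReal_zero] at h
  simp only [map_sub, map_add, real_smul, map_mul, conj_ofReal, conj_conj] at h
  rw [conj_eq_sq_div_of_norm_eq ha hr, conj_eq_sq_div_of_norm_eq hb hr,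
    conj_eq_sq_div_of_norm_eq hp hr] at h
  rw [conj_eq_sq_div_of_norm_eq hp hr, real_smul]
  field_simp at h ⊢
  refine mul_left_cancel₀ (sub_ne_zero.2 hab.symm) ?_
  linear_combination h

theorem collinear_feet_of_norm_eq {f₁ f₂ f₃ : ℂ}
    (ha : ‖a‖ = r) (hb : ‖b‖ = r) (hc : ‖c‖ = r) (hp : ‖p‖ = r)
    (hab : a ≠ b) (hbc : b ≠ c) (hca : c ≠ a)
    (h₁ : (∃ t : ℝ, f₁ = a + t • (b - a)) ∧ inner ℝ (p - f₁) (b - a) = 0)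
    (h₂ : (∃ t : ℝ, f₂ = b + t • (c - b)) ∧ inner ℝ (p - f₂) (c - b) = 0)
    (h₃ : (∃ t : ℝ, f₃ = c + t • (a - c)) ∧ inner ℝ (p - f₃) (a - c) = 0) :
    Collinear ℝ ({f₁, f₂, f₃} : Set ℂ) := by
  have hr := radius_ne_zero_of_ne ha hb hab
  have hpp : p * conj p = r ^ 2 := by rw [mul_conj', hp]
  have e₁ := foot_eq_of_norm_eq ha hb hp hab h₁.1 h₁.2
  have e₂ := foot_eq_of_norm_eq hb hc hp hbc h₂.1 h₂.2
  have e₃ := foot_eq_of_norm_eq hc ha hp hca h₃.1 h₃.2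
  have d₂ : 2 * r ^ 2 * (f₂ - f₁) = (c - a) * (p - b) * conj p := by
    linear_combination e₂ - e₁ - (c - a) * hpp
  have d₃ : 2 * r ^ 2 * (f₃ - f₁) = (c - b) * (p - a) * conj p := by
    linear_combination e₃ - e₁ - (c - b) * hpp
  have key : ((4 * r ^ 2 : ℝ) : ℂ) * ((f₃ - f₁) * conj (f₂ - f₁)) =
      (c - b) * (p - a) * conj ((c - a) * (p - b)) := by
    refine mul_left_cancel₀ (pow_ne_zero 2 (ofReal_ne_zero.2 hr)) ?_
    calc (r : ℂ) ^ 2 * (((4 * r ^ 2 : ℝ) : ℂ) * ((f₃ - f₁) * conj (f₂ - f₁)))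
        = 2 * r ^ 2 * (f₃ - f₁) * conj (2 * r ^ 2 * (f₂ - f₁)) := by
          simp only [map_mul, conj_ofReal, map_pow, map_ofNat]; push_cast; ring
      _ = p * conj p * ((c - b) * (p - a) * conj ((c - a) * (p - b))) := by
          rw [d₂, d₃]; simp only [map_mul, conj_conj]; ring
      _ = r ^ 2 * ((c - b) * (p - a) * conj ((c - a) * (p - b))) := by rw [hpp]
  apply collinear_of_im_mul_conj_eq_zero
  have him := congrArg im key
  rw [im_ofReal_mul, im_crossRatio_eq_zero ha hc hb hp] at him
  exact (mul_eq_zero.1 him).resolve_left (by positivity)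

end Complex

/-- Simson–Wallace: if `A, B, C, P` lie on a circle, the feet of the perpendiculars
from `P` to the three sides are collinear. -/
theorem simson_wallace (A B C P O : EuclideanSpace ℝ (Fin 2)) (R : ℝ)
    (hABC : ¬ Collinear ℝ ({A, B, C} : Set (EuclideanSpace ℝ (Fin 2))))
    (hA : dist O A = R) (hB : dist O B = R) (hC : dist O C = R) (hP : dist O P = R)
    (F₁ F₂ F₃ : EuclideanSpace ℝ (Fin 2))
    (h₁ : IsFoot P A B F₁) (h₂ : IsFoot P B C F₂) (h₃ : IsFoot P C A F₃) :
    Collinear ℝ ({F₁, F₂, F₃} : Set (EuclideanSpace ℝ (Fin 2))) := by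
  have hAB : A ≠ B := by rintro rfl; exact hABC (by simpa using collinear_pair ℝ A C)
  have hBC : B ≠ C := by rintro rfl; exact hABC (by simpa using collinear_pair ℝ A B)
  have hCA : C ≠ A := by rintro rfl; exact hABC (by simpa using collinear_pair ℝ B C)
  let φ : EuclideanSpace ℝ (Fin 2) ≃ᵃⁱ[ℝ] ℂ := (AffineIsometryEquiv.vaddConst ℝ O).symm.trans
    Complex.orthonormalBasisOneI.repr.symm.toAffineIsometryEquiv
  have hφ : ∀ X, dist O X = R → ‖φ X‖ = R := fun X hX => by
    rw [← hX, dist_comm, ← φ.dist_map, show φ O = 0 by simp [φ], dist_zero_right]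
  have hfeet := Complex.collinear_feet_of_norm_eq (hφ A hA) (hφ B hB) (hφ C hC) (hφ P hP)
    (φ.injective.ne hAB) (φ.injective.ne hBC) (φ.injective.ne hCA)
    (h₁.map φ.toAffineIsometry) (h₂.map φ.toAffineIsometry) (h₃.map φ.toAffineIsometry)
  simpa [Set.image_insert_eq] using hfeet.map φ.symm.toAffineEquiv.toAffineMap
end

section
/- With vertices a, b, c and point p all on the unit circle in ℂ (a, b, c distinct), the three perpendicular feet f_ab = (a+b+p−abp̄)/2, f_bc = (b+c+p−bcp̄)/2, f_ca = (c+a+p−cap̄)/2 are collinear. -/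
open Complex ComplexConjugate

/-!
Subtracting the first foot from the other two gives `(c - a)(p - b)/(2p)` and `(c - b)(p - a)/(2p)`,
so collinearity reduces to the reality of the cross ratio of the concyclic points `c, p; a, b`.
-/

lemma collinear_of_im_mul_conj_sub_eq_zero {z₁ z₂ z₃ : ℂ}
    (h : ((z₃ - z₁) * conj (z₂ - z₁)).im = 0) : Collinear ℝ ({z₁, z₂, z₃} : Set ℂ) := by
  rcases eq_or_ne z₂ z₁ with rfl | hne
  · simpa using collinear_pair ℝ z₂ z₃
  set v := z₂ - z₁
  set w := (z₃ - z₁) * conj v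
  have hv : v ≠ 0 := sub_ne_zero.mpr hne
  have hw : (w.re : ℂ) = w := Complex.ext rfl (by simp [h])
  have hz₃ : z₃ - z₁ = (w.re / normSq v) • v := by
    rw [real_smul, ofReal_div, hw, ← mul_conj, mul_comm v]
    field_simp [(map_ne_zero _).mpr hv]
    simp only [w]
  rw [collinear_iff_of_mem (Set.mem_insert _ _)]
  refine ⟨v, ?_⟩
  rintro _ (rfl | rfl | rfl)
  · exact ⟨0, by simp⟩
  · exact ⟨1, by simp [v]⟩
  · exact ⟨_, by rw [← hz₃]; simp⟩

lemma im_cross_ratio_eq_zero_of_norm_eq_one {a b c d : ℂ}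
    (ha : ‖a‖ = 1) (hb : ‖b‖ = 1) (hc : ‖c‖ = 1) (hd : ‖d‖ = 1) :
    ((a - b) * (c - d) * conj ((a - d) * (c - b))).im = 0 := by
  have h₀ {z : ℂ} (hz : ‖z‖ = 1) : z ≠ 0 := norm_ne_zero_iff.mp (by simp [hz])
  rw [← conj_eq_iff_im]
  simp only [map_mul, map_sub, map_inv₀, inv_inv, (inv_eq_conj ha).symm, (inv_eq_conj hb).symm,
    (inv_eq_conj hc).symm, (inv_eq_conj hd).symm]
  field_simp [h₀ ha, h₀ hb, h₀ hc, h₀ hd]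
  ring

/-- The foot of the perpendicular from `p` to the chord `xy` of the unit circle. -/
noncomputable def simsonFoot (p x y : ℂ) : ℂ := (x + y + p - x * y * conj p) / 2

lemma simsonFoot_comm (p x y : ℂ) : simsonFoot p x y = simsonFoot p y x := by
  simp only [simsonFoot, add_comm x y, mul_comm x y]

lemma simsonFoot_sub_simsonFoot {p : ℂ} (hp : ‖p‖ = 1) (x y z : ℂ) :
    simsonFoot p y z - simsonFoot p x y = (z - x) * (p - y) / (2 * p) := by
  have hp₀ : p ≠ 0 := norm_ne_zero_iff.mp (by simp [hp])
  rw [simsonFoot, simsonFoot, ← inv_eq_conj hp]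
  field_simp
  ring

lemma div_mul_conj_div_of_norm_eq_one {p : ℂ} (hp : ‖p‖ = 1) (u v : ℂ) :
    u / (2 * p) * conj (v / (2 * p)) = u * conj v / 4 := by
  have hp₀ : p ≠ 0 := norm_ne_zero_iff.mp (by simp [hp])
  simp only [map_div₀, map_mul, map_ofNat, ← inv_eq_conj hp]
  field_simp
  ring

theorem simson_feet_collinear_general (a b c p : ℂ)
    (ha : ‖a‖ = 1) (hb : ‖b‖ = 1) (hc : ‖c‖ = 1)
    (hp : ‖p‖ = 1) :
    Collinear ℝ ({(a + b + p - a * b * (starRingEnd ℂ p)) / 2,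
                  (b + c + p - b * c * (starRingEnd ℂ p)) / 2,
                  (c + a + p - c * a * (starRingEnd ℂ p)) / 2} : Set ℂ) := by
  change Collinear ℝ {simsonFoot p a b, simsonFoot p b c, simsonFoot p c a}
  refine collinear_of_im_mul_conj_sub_eq_zero ?_
  rw [simsonFoot_sub_simsonFoot hp a b c, simsonFoot_comm p c a, simsonFoot_comm p a b,
    simsonFoot_sub_simsonFoot hp b a c, div_mul_conj_div_of_norm_eq_one hp, div_ofNat_im,
    im_cross_ratio_eq_zero_of_norm_eq_one hc hb hp ha, zero_div]

/-- With `a`, `b`, `c`, `p` on the unit circle (`a`, `b`, `c` pairwise distinct),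
the three perpendicular feet `(a+b+p−ab·conj p)/2`, `(b+c+p−bc·conj p)/2`,
`(c+a+p−ca·conj p)/2` are collinear (the Simson–Wallace line). -/
theorem simson_feet_collinear (a b c p : ℂ)
    (ha : ‖a‖ = 1) (hb : ‖b‖ = 1) (hc : ‖c‖ = 1)
    (hp : ‖p‖ = 1)
    (hab : a ≠ b) (hbc : b ≠ c) (hca : c ≠ a) :
    Collinear ℝ ({(a + b + p - a * b * (starRingEnd ℂ p)) / 2,
                  (b + c + p - b * c * (starRingEnd ℂ p)) / 2,
                  (c + a + p - c * a * (starRingEnd ℂ p)) / 2} : Set ℂ) :=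
  simson_feet_collinear_general a b c p ha hb hc hp
end

section
/- If two distinct points P and Q on the circumcircle of a triangle are diametrically opposite, then their Simson lines with respect to that triangle are perpendicular. -/
open Module Submodule RealInnerProductSpace

section InnerProductSpace

variable {E : Type*} [NormedAddCommGroup E] [InnerProductSpace ℝ E]

theorem inner_sub_sub_eq_zero_of_dist_eq {O B P : E} (h : dist O B = dist O P) :
    ⟪P - B, (2 : ℝ) • O - P - B⟫ = 0 := by
  have hthales := (real_inner_add_sub_eq_zero_iff (O - B) (P - O)).2 <| by
    rw [← dist_eq_norm, ← dist_eq_norm', h]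
  convert hthales using 2 <;> module

theorem gram_identity_of_finrank_eq_two (h : finrank ℝ E = 2) (u v p q : E) :
    ‖u‖ ^ 2 * ⟪v, p⟫ * ⟪v, q⟫ + ‖v‖ ^ 2 * ⟪u, p⟫ * ⟪u, q⟫ -
        ⟪u, v⟫ * (⟪v, p⟫ * ⟪u, q⟫ + ⟪u, p⟫ * ⟪v, q⟫) =
      (‖u‖ ^ 2 * ‖v‖ ^ 2 - ⟪u, v⟫ ^ 2) * ⟪p, q⟫ := by
  have : FiniteDimensional ℝ E := Module.finite_of_finrank_eq_succ h
  let f := ((stdOrthonormalBasis ℝ E).reindex (finCongr h)).repr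
  have hplane (u v p q : EuclideanSpace ℝ (Fin 2)) :
      ‖u‖ ^ 2 * ⟪v, p⟫ * ⟪v, q⟫ + ‖v‖ ^ 2 * ⟪u, p⟫ * ⟪u, q⟫ -
          ⟪u, v⟫ * (⟪v, p⟫ * ⟪u, q⟫ + ⟪u, p⟫ * ⟪v, q⟫) =
        (‖u‖ ^ 2 * ‖v‖ ^ 2 - ⟪u, v⟫ ^ 2) * ⟪p, q⟫ := by
    simp only [EuclideanSpace.norm_sq_eq, EuclideanSpace.inner_eq_star_dotProduct, dotProduct,
      Fin.sum_univ_two, Real.norm_eq_abs, sq_abs, star_trivial]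
    ring
  simpa only [LinearIsometryEquiv.norm_map, LinearIsometryEquiv.inner_map_map] using
    hplane (f u) (f v) (f p) (f q)

theorem inner_starProjection_sub_starProjection (h : finrank ℝ E = 2) (u v p q : E) :
    ‖u‖ ^ 2 * ‖v‖ ^ 2 *
        ⟪(ℝ ∙ v).starProjection p - (ℝ ∙ u).starProjection p,
          (ℝ ∙ v).starProjection q - (ℝ ∙ u).starProjection q⟫ =
      (‖u‖ ^ 2 * ‖v‖ ^ 2 - ⟪u, v⟫ ^ 2) * ⟪p, q⟫ := by
  rcases eq_or_ne u 0 with rfl | hu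
  · simp
  rcases eq_or_ne v 0 with rfl | hv
  · simp
  simp only [starProjection_singleton, inner_sub_left, inner_sub_right, real_inner_smul_left,
    real_inner_smul_right, RCLike.ofReal_real_eq_id, id, real_inner_self_eq_norm_sq]
  field_simp
  rw [real_inner_comm u v]
  linear_combination gram_identity_of_finrank_eq_two h u v p q

theorem inner_starProjection_sub_starProjection_eq_zero (h : finrank ℝ E = 2) {u v p q : E}
    (hu : u ≠ 0) (hv : v ≠ 0) (hpq : ⟪p, q⟫ = 0) :
    ⟪(ℝ ∙ v).starProjection p - (ℝ ∙ u).starProjection p,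
      (ℝ ∙ v).starProjection q - (ℝ ∙ u).starProjection q⟫ = 0 := by
  have hidentity := inner_starProjection_sub_starProjection h u v p q
  rw [hpq, mul_zero] at hidentity
  simpa [hu, hv] using hidentity

end InnerProductSpace

namespace IsFoot

variable {P A B F : EuclideanSpace ℝ (Fin 2)}

theorem symm (h : IsFoot P A B F) : IsFoot P B A F := by
  obtain ⟨⟨t, rfl⟩, hperp⟩ := h
  refine ⟨⟨1 - t, by module⟩, ?_⟩
  rw [← neg_sub B A, inner_neg_right, hperp, neg_zero]

theorem sub_eq_starProjection (h : IsFoot P A B F) :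
    F - A = (ℝ ∙ (B - A)).starProjection (P - A) := by
  obtain ⟨⟨t, rfl⟩, hperp⟩ := h
  refine (eq_starProjection_of_mem_of_inner_eq_zero ?_ fun w hw => ?_).symm
  · exact mem_span_singleton.2 ⟨t, by abel⟩
  · obtain ⟨s, rfl⟩ := mem_span_singleton.1 hw
    rw [sub_sub_sub_cancel_right, real_inner_smul_right, hperp, mul_zero]

end IsFoot

theorem simson_lines_perpendicular_general (A B C O P Q : EuclideanSpace ℝ (Fin 2)) (R : ℝ)
    (hABC : ¬ Collinear ℝ ({A, B, C} : Set (EuclideanSpace ℝ (Fin 2))))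
    (hB : dist O B = R)
    (hP : dist O P = R) (hQ : Q = (2 : ℝ) • O - P)
    (F₁ F₂ G₁ G₂ : EuclideanSpace ℝ (Fin 2))
    (hF₁ : IsFoot P A B F₁) (hF₂ : IsFoot P B C F₂)
    (hG₁ : IsFoot Q A B G₁) (hG₂ : IsFoot Q B C G₂) :
    inner ℝ (F₂ - F₁) (G₂ - G₁) = (0 : ℝ) := by
  have hAB : A - B ≠ 0 := sub_ne_zero.2 <| by
    rintro rfl; exact hABC (by simpa using collinear_pair ℝ A C)
  have hCB : C - B ≠ 0 := sub_ne_zero.2 <| by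
    rintro rfl; exact hABC (by simpa using collinear_pair ℝ A C)
  have hthales : ⟪P - B, Q - B⟫ = 0 := hQ ▸ inner_sub_sub_eq_zero_of_dist_eq (hB.trans hP.symm)
  have hF : F₂ - F₁ =
      (ℝ ∙ (C - B)).starProjection (P - B) - (ℝ ∙ (A - B)).starProjection (P - B) := by
    rw [← hF₂.sub_eq_starProjection, ← hF₁.symm.sub_eq_starProjection, sub_sub_sub_cancel_right]
  have hG : G₂ - G₁ =
      (ℝ ∙ (C - B)).starProjection (Q - B) - (ℝ ∙ (A - B)).starProjection (Q - B) := by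
    rw [← hG₂.sub_eq_starProjection, ← hG₁.symm.sub_eq_starProjection, sub_sub_sub_cancel_right]
  rw [hF, hG]
  exact inner_starProjection_sub_starProjection_eq_zero finrank_euclideanSpace_fin hAB hCB hthales

/-- The Simson lines of two diametrically opposite points of the circumcircle
are perpendicular. -/
theorem simson_lines_perpendicular (A B C O P Q : EuclideanSpace ℝ (Fin 2)) (R : ℝ)
    (hABC : ¬ Collinear ℝ ({A, B, C} : Set (EuclideanSpace ℝ (Fin 2))))
    (hA : dist O A = R) (hB : dist O B = R) (hC : dist O C = R)
    (hP : dist O P = R) (hQ : Q = (2 : ℝ) • O - P) (hPQ : P ≠ Q)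
    (F₁ F₂ F₃ G₁ G₂ G₃ : EuclideanSpace ℝ (Fin 2))
    (hF₁ : IsFoot P A B F₁) (hF₂ : IsFoot P B C F₂) (hF₃ : IsFoot P C A F₃)
    (hG₁ : IsFoot Q A B G₁) (hG₂ : IsFoot Q B C G₂) (hG₃ : IsFoot Q C A G₃)
    (hF : F₁ ≠ F₂) (hG : G₁ ≠ G₂) :
    inner ℝ (F₂ - F₁) (G₂ - G₁) = (0 : ℝ) :=
  simson_lines_perpendicular_general A B C O P Q R hABC hB hP hQ F₁ F₂ G₁ G₂ hF₁ hF₂ hG₁ hG₂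
end

section
/- The tangent line to the tricuspid hypocycloid at a non-cusp point γ(α) meets the curve again, and the segment of the tangent cut off by the curve has constant length 4r independent of α; in particular the two further intersection points γ(α₁), γ(α₂) of the tangent with the curve satisfy ‖γ(α₁) − γ(α₂)‖ = 4r. -/
open Real

/-!
Write `α = 2c`, `e θ = (cos θ, sin θ)` and `u = e (-c)`. Sum-to-product identities give
`γ (2c) = r e(2c) + 2r cos 3c • u`, `γ (-c) = r e(2c) + 2r • u`, `γ (π - c) = r e(2c) - 2r • u`
and `γ' (2c) = -4r sin 3c • u`. So the tangent at `γ (2c)` is the line through `r e(2c)` in the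
direction of the unit vector `u`, and it cuts the curve in the chord `[γ (-c), γ (π - c)]` of
length `4r`. The point is a cusp exactly when `sin 3c = 0`; otherwise `cos 3c ≠ ±1`, so the three
points are distinct.
-/

noncomputable section

lemma exists_add_smul_eq_add_smul_add_smul {K V : Type*} [Field K] [AddCommGroup V]
    [Module K V] (m u : V) {k : K} (hk : k ≠ 0) (a b : K) :
    ∃ t : K, m + b • u = m + a • u + t • k • u :=
  ⟨(b - a) / k, by rw [smul_smul, div_mul_cancel₀ _ hk, sub_smul]; abel⟩

lemma hasDerivAt_euclideanSpace_fin_two {f g : ℝ → ℝ} {f' g' x : ℝ} (hf : HasDerivAt f f' x)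
    (hg : HasDerivAt g g' x) : HasDerivAt (fun t => !₂[f t, g t]) !₂[f', g'] x := by
  have hpi : HasDerivAt (fun t => ![f t, g t]) ![f', g'] x :=
    hasDerivAt_pi.2 (Fin.forall_fin_two.2 ⟨hf, hg⟩)
  exact (PiLp.hasFDerivAt_toLp 2 _).comp_hasDerivAt x hpi

def unitVec (θ : ℝ) : EuclideanSpace ℝ (Fin 2) := !₂[cos θ, sin θ]

@[simp]
lemma norm_unitVec (θ : ℝ) : ‖unitVec θ‖ = 1 := by
  simp [unitVec, EuclideanSpace.norm_eq, Fin.sum_univ_two]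

def deltoid (r α : ℝ) : EuclideanSpace ℝ (Fin 2) :=
  !₂[r * (2 * cos α + cos (2 * α)), r * (2 * sin α - sin (2 * α))]

lemma deltoid_two_mul (r c : ℝ) :
    deltoid r (2 * c) = r • unitVec (2 * c) + (2 * r * cos (3 * c)) • unitVec (-c) := by
  ext i
  fin_cases i <;> simp [deltoid, unitVec]
  · rw [show 2 * (2 * c) = 3 * c + c by ring, show 2 * c = 3 * c - c by ring, cos_add, cos_sub]
    ring
  · rw [show 2 * (2 * c) = 3 * c + c by ring, show 2 * c = 3 * c - c by ring, sin_add, sin_sub]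
    ring

lemma deltoid_neg (r c : ℝ) :
    deltoid r (-c) = r • unitVec (2 * c) + (2 * r) • unitVec (-c) := by
  ext i
  fin_cases i <;> simp [deltoid, unitVec] <;> ring

lemma deltoid_pi_sub (r c : ℝ) :
    deltoid r (π - c) = r • unitVec (2 * c) + (-2 * r) • unitVec (-c) := by
  have h2 : 2 * (π - c) = -(2 * c) + 2 * π := by ring
  ext i
  fin_cases i <;> simp [deltoid, unitVec, h2] <;> ring

lemma hasDerivAt_deltoid (r α : ℝ) :
    HasDerivAt (deltoid r)
      !₂[r * (-2 * sin α - 2 * sin (2 * α)), r * (2 * cos α - 2 * cos (2 * α))] α :=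
  hasDerivAt_euclideanSpace_fin_two
    ((((hasDerivAt_cos α).const_mul 2).add ((hasDerivAt_id' α).const_mul 2).cos).const_mul
      r |>.congr_deriv (by ring))
    ((((hasDerivAt_sin α).const_mul 2).sub ((hasDerivAt_id' α).const_mul 2).sin).const_mul
      r |>.congr_deriv (by ring))

lemma deriv_deltoid_two_mul (r c : ℝ) :
    deriv (deltoid r) (2 * c) = (-4 * r * sin (3 * c)) • unitVec (-c) := by
  rw [(hasDerivAt_deltoid r _).deriv]
  ext i
  fin_cases i <;> simp [unitVec]
  · rw [show 2 * (2 * c) = 3 * c + c by ring, show 2 * c = 3 * c - c by ring, sin_add, sin_sub]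
    ring
  · rw [show 2 * (2 * c) = 3 * c + c by ring, show 2 * c = 3 * c - c by ring, cos_add, cos_sub]
    ring

end

/-- Constant tangent-chord property of the deltoid: the tangent line at any non-cusp
point meets the curve in two further points, and the chord it cuts has length `4r`. -/
theorem deltoid_tangent_chord (r : ℝ) (hr : 0 < r)
    (γ : ℝ → EuclideanSpace ℝ (Fin 2))
    (hγ : ∀ α, γ α = ![r * (2 * cos α + cos (2 * α)), r * (2 * sin α - sin (2 * α))]) :
    ∀ α : ℝ, deriv γ α ≠ 0 →
      ∃ α₁ α₂ : ℝ,
        γ α₁ ≠ γ α ∧ γ α₂ ≠ γ α ∧ γ α₁ ≠ γ α₂ ∧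
        (∃ t : ℝ, γ α₁ = γ α + t • deriv γ α) ∧
        (∃ t : ℝ, γ α₂ = γ α + t • deriv γ α) ∧
        dist (γ α₁) (γ α₂) = 4 * r := by
  obtain rfl : γ = deltoid r := funext fun α => WithLp.ofLp_injective 2 (hγ α)
  intro α hα
  obtain ⟨c, rfl⟩ : ∃ c, α = 2 * c := ⟨α / 2, by ring⟩
  rw [deriv_deltoid_two_mul] at hα ⊢
  have hk : -4 * r * sin (3 * c) ≠ 0 := left_ne_zero_of_smul hα
  have hcos : cos (3 * c) ≠ 1 ∧ cos (3 * c) ≠ -1 := by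
    simpa [sin_eq_zero_iff_cos_eq, not_or] using right_ne_zero_of_mul hk
  have hu : unitVec (-c) ≠ 0 := norm_ne_zero_iff.1 (by simp)
  refine ⟨-c, π - c, ?_⟩
  simp only [deltoid_two_mul, deltoid_neg, deltoid_pi_sub, ne_eq, add_right_inj, smul_left_inj hu]
  refine ⟨?_, ?_, ?_, exists_add_smul_eq_add_smul_add_smul _ _ hk _ _,
    exists_add_smul_eq_add_smul_add_smul _ _ hk _ _, ?_⟩
  · exact fun h => hcos.1 (mul_left_cancel₀ hr.ne' (by linear_combination -h / 2))
  · exact fun h => hcos.2 (mul_left_cancel₀ hr.ne' (by linear_combination -h / 2))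
  · intro h
    linarith
  · rw [dist_add_left, dist_eq_norm, ← sub_smul, norm_smul, norm_unitVec, mul_one,
      show 2 * r - -2 * r = 4 * r by ring, Real.norm_of_nonneg (by positivity)]
end
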